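/- arXiv:1203.0643 — 3 statements merged into one kernel-verified Lean document; each statement's English description precedes it below -/
import Mathlib

section
/- For probability measures ν ≪ μ on a measurable space and a measurable function ψ with ∫ e^ψ dμ < ∞, the Donsker–Varadhan variational formula holds: log ∫ e^ψ dμ = sup over ν ≪ μ of (∫ ψ dν − D(ν‖μ)), where D(ν‖μ) = ∫ log(dν/dμ) dν is the relative entropy; moreover the supremum is attained at the measure ν* with dν*/dμ = e^ψ / ∫ e^ψ dμ. -/
/-!
Tilting `μ` by `ψ` gives the probability measure `μ.tilted ψ` with density `e^ψ / ∫ e^ψ dμ`.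
For `ν ≪ μ` the log-likelihood ratios satisfy
`log (dν/dμ.tilted ψ) = log (dν/dμ) - ψ + log ∫ e^ψ dμ`, so
`∫ ψ dν - D(ν‖μ) = log ∫ e^ψ dμ - D(ν‖μ.tilted ψ)`. Gibbs' inequality `D(ν‖μ.tilted ψ) ≥ 0`
gives the upper bound, with equality for `ν = μ.tilted ψ`.
-/

open MeasureTheory Real

namespace MeasureTheory

variable {α : Type*} [MeasurableSpace α] {μ : Measure α} {f : α → ℝ}

lemma integrable_tilted_self (hf : Integrable (fun x ↦ exp (f x)) μ)
    (hf_mul : Integrable (fun x ↦ |f x| * exp (f x)) μ) : Integrable f (μ.tilted f) := by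
  rw [integrable_tilted_iff hf]
  refine hf_mul.mono' ?_ (ae_of_all _ fun x ↦ ?_)
  · exact hf.1.mul (aemeasurable_of_aemeasurable_exp hf.1.aemeasurable).aestronglyMeasurable
  · simp [mul_comm]

lemma llr_tilted_self_ae_eq [SigmaFinite μ] (hf : Integrable (fun x ↦ exp (f x)) μ) :
    llr (μ.tilted f) μ =ᵐ[μ.tilted f] fun x ↦ f x - log (∫ x, exp (f x) ∂μ) :=
  (tilted_absolutelyContinuous μ f).ae_le (log_rnDeriv_tilted_left_self hf)

lemma integrable_llr_tilted_self [SigmaFinite μ] (hf : Integrable (fun x ↦ exp (f x)) μ)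
    (hf_tilted : Integrable f (μ.tilted f)) : Integrable (llr (μ.tilted f) μ) (μ.tilted f) :=
  (hf_tilted.sub (integrable_const _)).congr (llr_tilted_self_ae_eq hf).symm

lemma integral_sub_integral_llr_tilted_self [SigmaFinite μ] [NeZero μ]
    (hf : Integrable (fun x ↦ exp (f x)) μ) (hf_tilted : Integrable f (μ.tilted f)) :
    ∫ x, f x ∂(μ.tilted f) - ∫ x, llr (μ.tilted f) μ x ∂(μ.tilted f)
      = log (∫ x, exp (f x) ∂μ) := by
  have := isProbabilityMeasure_tilted hf
  rw [integral_congr_ae (llr_tilted_self_ae_eq hf), integral_sub hf_tilted (integrable_const _),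
    integral_const, probReal_univ, one_smul, sub_sub_cancel]

lemma integral_sub_integral_llr_le_log_integral_exp [SigmaFinite μ] [NeZero μ] {ν : Measure α}
    [IsProbabilityMeasure ν] (hνμ : ν ≪ μ) (hfν : Integrable f ν)
    (h_llr : Integrable (llr ν μ) ν) (hf : Integrable (fun x ↦ exp (f x)) μ) :
    ∫ x, f x ∂ν - ∫ x, llr ν μ x ∂ν ≤ log (∫ x, exp (f x) ∂μ) := by
  have := isProbabilityMeasure_tilted hf
  have h_gibbs := InformationTheory.integral_llr_add_sub_measure_univ_nonneg
    (hνμ.trans (absolutelyContinuous_tilted hf)) (integrable_llr_tilted_right hνμ hfν h_llr hf)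
  rw [integral_llr_tilted_right hνμ hfν hf h_llr, probReal_univ, probReal_univ] at h_gibbs
  linarith

end MeasureTheory

theorem donsker_varadhan_general {Ω : Type*} [MeasurableSpace Ω]
    (μ : Measure Ω) [IsProbabilityMeasure μ]
    (ψ : Ω → ℝ)
    (h1 : Integrable (fun x => Real.exp (ψ x)) μ)
    (h2 : Integrable (fun x => |ψ x| * Real.exp (ψ x)) μ) :
    IsGreatest
      {r : ℝ | ∃ ν : Measure Ω, IsProbabilityMeasure ν ∧ ν ≪ μ ∧
        Integrable ψ ν ∧
        Integrable (fun x => Real.log ((ν.rnDeriv μ x).toReal)) ν ∧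
        r = (∫ x, ψ x ∂ν) - ∫ x, Real.log ((ν.rnDeriv μ x).toReal) ∂ν}
      (Real.log (∫ x, Real.exp (ψ x) ∂μ)) ∧
    ((∫ x, ψ x ∂(μ.withDensity
        (fun x => ENNReal.ofReal (Real.exp (ψ x) / ∫ x, Real.exp (ψ x) ∂μ)))) -
      ∫ x, Real.log (((μ.withDensity
        (fun x => ENNReal.ofReal (Real.exp (ψ x) / ∫ x, Real.exp (ψ x) ∂μ))).rnDeriv μ x).toReal)
        ∂(μ.withDensity
        (fun x => ENNReal.ofReal (Real.exp (ψ x) / ∫ x, Real.exp (ψ x) ∂μ)))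
        = Real.log (∫ x, Real.exp (ψ x) ∂μ)) := by
  have hψ_tilted := integrable_tilted_self h1 h2
  have h_attained := integral_sub_integral_llr_tilted_self h1 hψ_tilted
  refine ⟨⟨⟨μ.tilted ψ, isProbabilityMeasure_tilted h1, tilted_absolutelyContinuous μ ψ,
    hψ_tilted, integrable_llr_tilted_self h1 hψ_tilted, h_attained.symm⟩, ?_⟩, h_attained⟩
  rintro r ⟨ν, hν, hνμ, hψν, h_llr, rfl⟩
  exact integral_sub_integral_llr_le_log_integral_exp hνμ hψν h_llr h1

/-- Donsker–Varadhan variational formula: `log ∫ e^ψ dμ` is the supremum (attained)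
of `∫ ψ dν − D(ν‖μ)` over probability measures `ν ≪ μ`, and the supremum is attained
at the measure with density `e^ψ / ∫ e^ψ dμ` w.r.t. `μ`. -/
theorem donsker_varadhan {Ω : Type*} [MeasurableSpace Ω]
    (μ : Measure Ω) [IsProbabilityMeasure μ]
    (ψ : Ω → ℝ) (hψ : Measurable ψ)
    (h1 : Integrable (fun x => Real.exp (ψ x)) μ)
    (h2 : Integrable (fun x => |ψ x| * Real.exp (ψ x)) μ) :
    IsGreatest
      {r : ℝ | ∃ ν : Measure Ω, IsProbabilityMeasure ν ∧ ν ≪ μ ∧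
        Integrable ψ ν ∧
        Integrable (fun x => Real.log ((ν.rnDeriv μ x).toReal)) ν ∧
        r = (∫ x, ψ x ∂ν) - ∫ x, Real.log ((ν.rnDeriv μ x).toReal) ∂ν}
      (Real.log (∫ x, Real.exp (ψ x) ∂μ)) ∧
    ((∫ x, ψ x ∂(μ.withDensity
        (fun x => ENNReal.ofReal (Real.exp (ψ x) / ∫ x, Real.exp (ψ x) ∂μ)))) -
      ∫ x, Real.log (((μ.withDensity
        (fun x => ENNReal.ofReal (Real.exp (ψ x) / ∫ x, Real.exp (ψ x) ∂μ))).rnDeriv μ x).toReal)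
        ∂(μ.withDensity
        (fun x => ENNReal.ofReal (Real.exp (ψ x) / ∫ x, Real.exp (ψ x) ∂μ)))
        = Real.log (∫ x, Real.exp (ψ x) ∂μ)) :=
  donsker_varadhan_general μ ψ h1 h2
end

section
/- (Pareto twisting on truncated support: constraint solvability) Let f(x) = (α−1)(1+x)^{−α} on [0,∞), α > 2, and c > 1/(α−2). For each M large enough there exists λ_M > 0 such that the density f_{λ_M}(x) = e^{λ_M x} f(x) 1_{[0,M]}(x) / ∫₀^M e^{λ_M u} f(u) du has mean c; moreover λ_M → 0 and the relative entropy D(f_{λ_M}‖f) = ∫ log(f_{λ_M}/f) f_{λ_M} dx → 0 as M → ∞. -/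
/-!
The mean gap `G_M(λ) = ∫₀^M (x - c) e^{λx} f(x) dx` is continuous in `λ`. At `λ = 0` it tends to
`1/(α-2) - c < 0` as `M → ∞`, while for every fixed `ε > 0` it tends to `+∞`, because
`e^{εx} f(x) → ∞` for a polynomially decaying density. So for large `M` the least nonnegative
zero `λ_M` of `G_M` lies in `(0, ε]`, which gives both the mean constraint and `λ_M → 0`.
At `λ_M` the relative entropy equals `λ_M c - log Z_M(λ_M)`, and `Z_M(λ_M) → 1` because
`Z_M(0) ≤ Z_M(λ) ≤ Z_M(0) + λ ∫₀^M x e^{λx} f = Z_M(0) + λ c Z_M(λ)` (from `e^t - 1 ≤ t e^t`).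
-/

open MeasureTheory Real Filter Set Topology

theorem continuous_setIntegral_Icc_of_continuousOn {F : ℝ → ℝ → ℝ} {a : ℝ}
    (hF : ContinuousOn (Function.uncurry F) (univ ×ˢ Ici a)) (b : ℝ) :
    Continuous fun l => ∫ x in Icc a b, F l x := by
  have hmax : (fun l => ∫ x in Icc a b, F l x) = fun l => ∫ x in Icc a b, F l (max x a) :=
    funext fun l => setIntegral_congr_fun measurableSet_Icc fun x hx => by rw [max_eq_left hx.1]
  rw [hmax]
  exact continuous_parametric_integral_of_continuous (f := fun l x => F l (max x a))
    (hF.comp_continuous (f := fun p : ℝ × ℝ => (p.1, max p.2 a)) (by fun_prop)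
      fun p => ⟨trivial, le_max_right p.2 a⟩) isCompact_Icc

theorem tendsto_setIntegral_Icc_atTop {g : ℝ → ℝ} {a : ℝ}
    (hg : ∀ b, IntegrableOn g (Icc a b)) (hg_top : Tendsto g atTop atTop) :
    Tendsto (fun b => ∫ x in Icc a b, g x) atTop atTop := by
  obtain ⟨R, hR⟩ := eventually_atTop.mp (hg_top.eventually_ge_atTop 1)
  set R' := max a R
  have hlower : ∀ b ≥ R', (∫ x in Icc a R', g x) + (b - R') ≤ ∫ x in Icc a b, g x := by
    intro b hb
    have hsplit : ∫ x in Icc a b, g x = (∫ x in Icc a R', g x) + ∫ x in Ioc R' b, g x := by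
      rw [← setIntegral_union ((Iic_disjoint_Ioc le_rfl).mono_left Icc_subset_Iic_self)
        measurableSet_Ioc (hg R') ((hg b).mono_set (Ioc_subset_Icc_self.trans
          (Icc_subset_Icc_left (le_max_left a R)))), Icc_union_Ioc_eq_Icc (le_max_left a R) hb]
    have htail := setIntegral_ge_of_const_le_real measurableSet_Ioc measure_Ioc_lt_top.ne
      (fun x hx => hR x ((le_max_right a R).trans hx.1.le))
      ((hg b).mono_set (Ioc_subset_Icc_self.trans (Icc_subset_Icc_left (le_max_left a R))))
    rw [volume_real_Ioc_of_le hb, one_mul] at htail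
    linarith
  refine tendsto_atTop_mono' _ (eventually_atTop.mpr ⟨R', hlower⟩) ?_
  exact tendsto_atTop_add_const_left _ _ (tendsto_atTop_add_const_right _ _ tendsto_id)

noncomputable def firstNonnegRoot (g : ℝ → ℝ) : ℝ :=
  sInf {l | 0 ≤ l ∧ g l = 0}

theorem firstNonnegRoot_spec {g : ℝ → ℝ} {ε : ℝ} (hg : Continuous g) (hε : 0 ≤ ε)
    (h0 : g 0 < 0) (hpos : 0 < g ε) :
    firstNonnegRoot g ∈ Ioc 0 ε ∧ g (firstNonnegRoot g) = 0 := by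
  set S := {l | 0 ≤ l ∧ g l = 0}
  obtain ⟨l, hl, hgl⟩ := intermediate_value_Icc hε hg.continuousOn ⟨h0.le, hpos.le⟩
  have hbdd : BddBelow S := ⟨0, fun _ h => h.1⟩
  have hmem : firstNonnegRoot g ∈ S :=
    ((isClosed_le continuous_const continuous_id).inter
      (isClosed_singleton.preimage hg)).csInf_mem ⟨l, hl.1, hgl⟩ hbdd
  refine ⟨⟨hmem.1.lt_of_ne fun h => ?_, (csInf_le hbdd ⟨hl.1, hgl⟩).trans hl.2⟩, hmem.2⟩
  exact h0.ne (h ▸ hmem.2)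

noncomputable def twistPartition (f : ℝ → ℝ) (lam M : ℝ) : ℝ :=
  ∫ x in Icc 0 M, exp (lam * x) * f x

noncomputable def twistMoment (f : ℝ → ℝ) (lam M : ℝ) : ℝ :=
  ∫ x in Icc 0 M, x * (exp (lam * x) * f x)

-- The indicator of `[0, M]` in `f_λ` is left to the domain of integration.
noncomputable def twistedDensity (f : ℝ → ℝ) (lam M x : ℝ) : ℝ :=
  exp (lam * x) * f x / twistPartition f lam M

section Twist

variable {f : ℝ → ℝ}

theorem twistPartition_zero (M : ℝ) :
    twistPartition f 0 M = ∫ x in Icc 0 M, f x := by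
  simp [twistPartition]

theorem twistMoment_zero (M : ℝ) :
    twistMoment f 0 M = ∫ x in Icc 0 M, x * f x := by
  simp [twistMoment]

theorem integral_mul_twistedDensity (lam M : ℝ) :
    ∫ x in Icc 0 M, x * twistedDensity f lam M x =
      twistMoment f lam M / twistPartition f lam M := by
  simp only [twistedDensity, mul_div_assoc', integral_div]
  rfl

variable (hf : ContinuousOn f (Ici 0))
include hf

theorem integrableOn_exp_mul (lam M : ℝ) :
    IntegrableOn (fun x => exp (lam * x) * f x) (Icc 0 M) :=
  (by fun_prop : Continuous fun x => exp (lam * x)).continuousOn.mul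
    (hf.mono Icc_subset_Ici_self) |>.integrableOn_Icc

theorem integrableOn_mul_exp_mul (lam M : ℝ) :
    IntegrableOn (fun x => x * (exp (lam * x) * f x)) (Icc 0 M) :=
  continuousOn_id.mul ((by fun_prop : Continuous fun x => exp (lam * x)).continuousOn.mul
    (hf.mono Icc_subset_Ici_self)) |>.integrableOn_Icc

theorem continuous_twistPartition (M : ℝ) : Continuous fun lam => twistPartition f lam M :=
  continuous_setIntegral_Icc_of_continuousOn (F := fun lam x => exp (lam * x) * f x)
    ((by fun_prop : Continuous fun p : ℝ × ℝ => exp (p.1 * p.2)).continuousOn.mul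
      (hf.comp continuousOn_snd fun (_ : ℝ × ℝ) hp => hp.2)) M

theorem continuous_twistMoment (M : ℝ) : Continuous fun lam => twistMoment f lam M :=
  continuous_setIntegral_Icc_of_continuousOn (F := fun lam x => x * (exp (lam * x) * f x))
    (continuousOn_snd.mul
      ((by fun_prop : Continuous fun p : ℝ × ℝ => exp (p.1 * p.2)).continuousOn.mul
        (hf.comp continuousOn_snd fun (_ : ℝ × ℝ) hp => hp.2))) M

theorem integral_log_mul_twistedDensity {lam M : ℝ} (hZ : twistPartition f lam M ≠ 0) :
    ∫ x in Icc 0 M, log (exp (lam * x) / twistPartition f lam M) * twistedDensity f lam M x =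
      lam * (twistMoment f lam M / twistPartition f lam M) - log (twistPartition f lam M) := by
  set Z := twistPartition f lam M
  have hpt : ∀ x ∈ Icc (0 : ℝ) M, log (exp (lam * x) / Z) * twistedDensity f lam M x =
      lam / Z * (x * (exp (lam * x) * f x)) - log Z / Z * (exp (lam * x) * f x) := by
    intro x _
    rw [twistedDensity, log_div (exp_ne_zero _) hZ, log_exp]
    ring
  rw [setIntegral_congr_fun measurableSet_Icc hpt,
    integral_sub ((integrableOn_mul_exp_mul hf lam M).const_mul _)
      ((integrableOn_exp_mul hf lam M).const_mul _), integral_const_mul, integral_const_mul]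
  change lam / Z * twistMoment f lam M - log Z / Z * Z = _
  field_simp

theorem tendsto_twistMoment_sub_atTop {ε : ℝ}
    (htail : Tendsto (fun x => exp (ε * x) * f x) atTop atTop) (c : ℝ) :
    Tendsto (fun M => twistMoment f ε M - c * twistPartition f ε M) atTop atTop := by
  have hint : ∀ M, IntegrableOn (fun x => (x - c) * (exp (ε * x) * f x)) (Icc 0 M) := fun M =>
    (continuousOn_id.sub continuousOn_const).mul
      ((by fun_prop : Continuous fun x => exp (ε * x)).continuousOn.mul
        (hf.mono Icc_subset_Ici_self)) |>.integrableOn_Icc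
  refine (tendsto_setIntegral_Icc_atTop hint
    ((tendsto_atTop_add_const_right _ (-c) tendsto_id).atTop_mul_atTop₀ htail)).congr fun M => ?_
  rw [twistMoment, twistPartition, ← integral_const_mul, ← integral_sub
    (integrableOn_mul_exp_mul hf ε M) ((integrableOn_exp_mul hf ε M).const_mul c)]
  congr 1 with x
  ring

variable (hf0 : ∀ x ≥ 0, 0 ≤ f x)
include hf0

theorem twistPartition_mono {lam mu : ℝ} (hle : lam ≤ mu) (M : ℝ) :
    twistPartition f lam M ≤ twistPartition f mu M :=
  setIntegral_mono_on (integrableOn_exp_mul hf lam M) (integrableOn_exp_mul hf mu M)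
    measurableSet_Icc fun x hx =>
      mul_le_mul_of_nonneg_right (exp_le_exp.mpr (by nlinarith [hx.1])) (hf0 x hx.1)

theorem twistPartition_le (lam M : ℝ) :
    twistPartition f lam M ≤ twistPartition f 0 M + lam * twistMoment f lam M := by
  have hpt : ∀ x ∈ Icc (0 : ℝ) M, exp (lam * x) * f x ≤
      exp (0 * x) * f x + lam * (x * (exp (lam * x) * f x)) := by
    intro x hx
    have hexp : (1 - lam * x) * exp (lam * x) ≤ 1 :=
      calc (1 - lam * x) * exp (lam * x) ≤ exp (-(lam * x)) * exp (lam * x) :=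
            mul_le_mul_of_nonneg_right (one_sub_le_exp_neg _) (exp_pos _).le
        _ = 1 := by rw [← exp_add, neg_add_cancel, exp_zero]
    rw [zero_mul, exp_zero]
    nlinarith [hf0 x hx.1]
  calc twistPartition f lam M
      ≤ ∫ x in Icc 0 M, (exp (0 * x) * f x + lam * (x * (exp (lam * x) * f x))) :=
        setIntegral_mono_on (integrableOn_exp_mul hf lam M)
          ((integrableOn_exp_mul hf 0 M).add ((integrableOn_mul_exp_mul hf lam M).const_mul lam))
          measurableSet_Icc hpt
    _ = twistPartition f 0 M + lam * twistMoment f lam M := by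
      rw [integral_add (integrableOn_exp_mul hf 0 M)
        ((integrableOn_mul_exp_mul hf lam M).const_mul lam), integral_const_mul]
      rfl

theorem tendsto_twistPartition_one (hmass : Tendsto (twistPartition f 0) atTop (𝓝 1))
    {lam : ℝ → ℝ} {c : ℝ} (hlam : Tendsto lam atTop (𝓝 0))
    (hlam_nonneg : ∀ᶠ M in atTop, 0 ≤ lam M)
    (hmoment : ∀ᶠ M in atTop, twistMoment f (lam M) M = c * twistPartition f (lam M) M) :
    Tendsto (fun M => twistPartition f (lam M) M) atTop (𝓝 1) := by
  have hden : Tendsto (fun M => 1 - lam M * c) atTop (𝓝 1) := by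
    simpa using tendsto_const_nhds.sub (hlam.mul_const c)
  have hupper : Tendsto (fun M => twistPartition f 0 M / (1 - lam M * c)) atTop (𝓝 1) := by
    have := hmass.div hden one_ne_zero
    rwa [div_one] at this
  refine tendsto_of_tendsto_of_tendsto_of_le_of_le' hmass hupper
    (hlam_nonneg.mono fun M h => twistPartition_mono hf hf0 h M) ?_
  filter_upwards [hmoment, hden.eventually_const_lt one_pos] with M hM hpos
  rw [le_div_iff₀ hpos]
  have := twistPartition_le hf hf0 (lam M) M
  rw [hM] at this
  linarith

theorem exists_truncated_twist (hmass : Tendsto (fun M => ∫ x in Icc 0 M, f x) atTop (𝓝 1))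
    {m c : ℝ} (hmean : Tendsto (fun M => ∫ x in Icc 0 M, x * f x) atTop (𝓝 m)) (hmc : m < c)
    (htail : ∀ ε > 0, Tendsto (fun x => exp (ε * x) * f x) atTop atTop) :
    ∃ (M₀ : ℝ) (lam : ℝ → ℝ),
      (∀ M ≥ M₀, 0 < lam M ∧ ∫ x in Icc 0 M, x * twistedDensity f (lam M) M x = c) ∧
      Tendsto lam atTop (𝓝 0) ∧
      Tendsto (fun M => ∫ x in Icc 0 M,
          log (exp (lam M * x) / twistPartition f (lam M) M) * twistedDensity f (lam M) M x)
        atTop (𝓝 0) := by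
  set G : ℝ → ℝ → ℝ := fun M l => twistMoment f l M - c * twistPartition f l M
  set lam : ℝ → ℝ := fun M => firstNonnegRoot (G M)
  have hZ0 : Tendsto (fun M => twistPartition f 0 M) atTop (𝓝 1) := by
    simpa only [twistPartition_zero] using hmass
  have hG0 : ∀ᶠ M in atTop, G M 0 < 0 := by
    have : Tendsto (fun M => G M 0) atTop (𝓝 (m - c * 1)) := by
      simpa only [G, twistMoment_zero, twistPartition_zero] using hmean.sub (hmass.const_mul c)
    exact this.eventually_lt_const (by linarith)
  have hroot : ∀ ε > 0, ∀ᶠ M in atTop, lam M ∈ Ioc 0 ε ∧ G M (lam M) = 0 := fun ε hε =>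
    (hG0.and ((tendsto_twistMoment_sub_atTop hf (htail ε hε) c).eventually_gt_atTop 0)).mono
      fun M h => firstNonnegRoot_spec ((continuous_twistMoment hf M).sub
        ((continuous_twistPartition hf M).const_mul c)) hε.le h.1 h.2
  have hlam : Tendsto lam atTop (𝓝 0) := tendsto_order.2
    ⟨fun a ha => (hroot 1 one_pos).mono fun M h => ha.trans h.1.1,
      fun a ha => (hroot (a / 2) (half_pos ha)).mono fun M h => h.1.2.trans_lt (half_lt_self ha)⟩
  have hmoment : ∀ᶠ M in atTop, twistMoment f (lam M) M = c * twistPartition f (lam M) M :=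
    (hroot 1 one_pos).mono fun M h => sub_eq_zero.mp h.2
  have hZ := tendsto_twistPartition_one hf hf0 hZ0 hlam
    ((hroot 1 one_pos).mono fun M h => h.1.1.le) hmoment
  have hZpos := hZ.eventually_const_lt one_pos
  obtain ⟨M₀, hM₀⟩ := eventually_atTop.mp ((hroot 1 one_pos).and hZpos)
  refine ⟨M₀, lam, fun M hM => ⟨(hM₀ M hM).1.1.1, ?_⟩, hlam, ?_⟩
  · rw [integral_mul_twistedDensity, sub_eq_zero.mp (hM₀ M hM).1.2,
      mul_div_cancel_right₀ _ (hM₀ M hM).2.ne']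
  · have hlim : Tendsto (fun M => lam M * c - log (twistPartition f (lam M) M)) atTop
        (𝓝 (0 * c - log 1)) :=
      (hlam.mul_const c).sub ((continuousAt_log one_ne_zero).tendsto.comp hZ)
    rw [zero_mul, log_one, sub_zero] at hlim
    refine hlim.congr' ?_
    filter_upwards [hmoment, hZpos] with M hM hpos
    rw [integral_log_mul_twistedDensity hf hpos.ne', hM, mul_div_cancel_right₀ _ hpos.ne']

end Twist

theorem integral_one_add_rpow {p : ℝ} (hp : p ≠ -1) {M : ℝ} (hM : 0 ≤ M) :
    ∫ x in Icc 0 M, (1 + x) ^ p = ((1 + M) ^ (p + 1) - 1) / (p + 1) := by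
  rw [integral_Icc_eq_integral_Ioc, ← intervalIntegral.integral_of_le hM,
    intervalIntegral.integral_comp_add_left (fun u => u ^ p), add_zero,
    integral_rpow (Or.inr ⟨hp, fun h => by
      linarith [(uIcc_of_le (by linarith : (1 : ℝ) ≤ 1 + M) ▸ h).1]⟩), one_rpow]

theorem tendsto_integral_one_add_rpow {p : ℝ} (hp : p < -1) :
    Tendsto (fun M => ∫ x in Icc 0 M, (1 + x) ^ p) atTop (𝓝 (-1 / (p + 1))) := by
  have hpow : Tendsto (fun M : ℝ => (1 + M) ^ (p + 1)) atTop (𝓝 0) := by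
    have h := (tendsto_rpow_neg_atTop (y := -(p + 1)) (by linarith)).comp
      (tendsto_atTop_add_const_left atTop 1 tendsto_id)
    rwa [neg_neg] at h
  have hlim := (hpow.sub_const 1).div_const (p + 1)
  rw [zero_sub, neg_div] at hlim
  rw [neg_div]
  refine hlim.congr' ?_
  filter_upwards [eventually_ge_atTop 0] with M hM
  rw [integral_one_add_rpow (by linarith) hM]

noncomputable def paretoDensity (α x : ℝ) : ℝ :=
  (α - 1) * (1 + x) ^ (-α)

section Pareto

variable {α : ℝ}

theorem continuousOn_paretoDensity : ContinuousOn (paretoDensity α) (Ici 0) :=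
  continuousOn_const.mul <| (continuousOn_const.add continuousOn_id).rpow_const
    fun x hx => Or.inl (show 1 + x ≠ 0 by linarith [mem_Ici.mp hx])

theorem paretoDensity_nonneg (hα : 1 ≤ α) {x : ℝ} (hx : 0 ≤ x) : 0 ≤ paretoDensity α x :=
  mul_nonneg (by linarith) (rpow_nonneg (by linarith) _)

theorem tendsto_integral_paretoDensity (hα : 1 < α) :
    Tendsto (fun M => ∫ x in Icc 0 M, paretoDensity α x) atTop (𝓝 1) := by
  have h := (tendsto_integral_one_add_rpow (p := -α) (by linarith)).const_mul (α - 1)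
  have hval : (α - 1) * (-1 / (-α + 1)) = 1 := by
    rw [show -α + 1 = -(α - 1) by ring, div_neg, neg_div, neg_neg,
      mul_one_div_cancel (by linarith)]
  rw [hval] at h
  simpa only [paretoDensity, integral_const_mul] using h

theorem tendsto_integral_mul_paretoDensity (hα : 2 < α) :
    Tendsto (fun M => ∫ x in Icc 0 M, x * paretoDensity α x) atTop (𝓝 (1 / (α - 2))) := by
  have hsplit : ∀ M, ∫ x in Icc 0 M, x * paretoDensity α x =
      (α - 1) * (∫ x in Icc 0 M, (1 + x) ^ (1 - α)) - ∫ x in Icc 0 M, paretoDensity α x := by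
    intro M
    unfold paretoDensity
    have hint : ∀ q : ℝ, IntegrableOn (fun x => (1 + x) ^ q) (Icc 0 M) := fun q =>
      ((continuousOn_const.add continuousOn_id).rpow_const
        fun x hx => Or.inl (show 1 + x ≠ 0 by linarith [hx.1])).integrableOn_Icc
    rw [← integral_const_mul, ← integral_sub ((hint _).const_mul _)
      (((hint _).const_mul (α - 1)))]
    refine setIntegral_congr_fun measurableSet_Icc fun x hx => ?_
    have h1x : 0 < 1 + x := by linarith [hx.1]
    rw [sub_eq_add_neg 1 α, rpow_add h1x, rpow_one]
    ring
  have h := ((tendsto_integral_one_add_rpow (p := 1 - α) (by linarith)).const_mul (α - 1)).sub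
    (tendsto_integral_paretoDensity (by linarith))
  have hval : (α - 1) * (-1 / (1 - α + 1)) - 1 = 1 / (α - 2) := by
    rw [show 1 - α + 1 = -(α - 2) by ring]
    field_simp [show α - 2 ≠ 0 by linarith]
    ring
  rw [hval] at h
  simpa only [hsplit] using h

theorem tendsto_exp_mul_paretoDensity (hα : 1 < α) {ε : ℝ} (hε : 0 < ε) :
    Tendsto (fun x => exp (ε * x) * paretoDensity α x) atTop atTop := by
  have h := ((tendsto_exp_mul_div_rpow_atTop α ε hε).comp
    (tendsto_atTop_add_const_left atTop 1 tendsto_id)).const_mul_atTop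
      (mul_pos (sub_pos.mpr hα) (exp_pos (-ε)))
  refine h.congr' ?_
  filter_upwards [eventually_ge_atTop 0] with x hx
  simp only [Function.comp_apply, id, paretoDensity]
  rw [rpow_neg (by linarith), mul_add, exp_add, exp_neg]
  field_simp

end Pareto

/-- Truncated exponential twisting of the Pareto density: for M large enough there
exists λ_M > 0 making the twisted truncated density have mean c; moreover
λ_M → 0 and the relative entropy D(f_{λ_M}‖f) → 0 as M → ∞. -/
theorem pareto_truncated_twist (α c : ℝ) (hα : 2 < α) (hc : 1 / (α - 2) < c) :
    letI f : ℝ → ℝ := fun x => (α - 1) * (1 + x) ^ (-α)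
    letI Z : ℝ → ℝ → ℝ := fun lam M => ∫ x in Set.Icc (0 : ℝ) M, Real.exp (lam * x) * f x
    ∃ (M₀ : ℝ) (lam : ℝ → ℝ),
      (∀ M ≥ M₀, 0 < lam M ∧
        (∫ x in Set.Icc (0 : ℝ) M, x * (Real.exp (lam M * x) * f x / Z (lam M) M)) = c) ∧
      Tendsto lam atTop (nhds 0) ∧
      Tendsto (fun M => ∫ x in Set.Icc (0 : ℝ) M,
          Real.log (Real.exp (lam M * x) / Z (lam M) M) *
            (Real.exp (lam M * x) * f x / Z (lam M) M))
        atTop (nhds 0) :=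
  exists_truncated_twist continuousOn_paretoDensity (fun _ => paretoDensity_nonneg (by linarith))
    (tendsto_integral_paretoDensity (by linarith)) (tendsto_integral_mul_paretoDensity hα) hc
    fun _ hε => tendsto_exp_mul_paretoDensity (by linarith) hε
end

section
/- (Tail transfer under a regularly varying marginal constraint) Let k=1 and suppose (X,Y) has joint density f̃(x,y) = g(x) φ(y; a + σ_{xy}(x − m)/σ_{xx}, v) where g is a probability density on ℝ that is regularly varying with index −α (α > 1), satisfies the domination condition g(b(t−s−a'))/g(t) ≤ h(s) for a nonnegative h with E[h(Z)] < ∞ for Gaussian Z, φ(·; m', v) is a Gaussian density with variance v > 0, and σ_{xy} > 0. Then the marginal density f̃_Y(s) = ∫ g(x) φ(s; a + σ_{xy}(x−m)/σ_{xx}, v) dx satisfies lim_{s→∞} f̃_Y(s)/g(s) = (σ_{xy}/σ_{xx})^{α−1}. -/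
/-!
Substituting `x = b (s - z - a')` with `b = σxx / σxy` turns the marginal into
`b · E[g (b (s - Z - a'))]` for a centred Gaussian `Z`. Regular variation gives
`g (b (s - z - a')) / g s → b ^ (-α)` for each `z`, and the domination hypothesis lets dominated
convergence pass to the limit `b · b ^ (-α) = (σxy / σxx) ^ (α - 1)`.
The pointwise limit needs `g (η t · t) / g t → η₀ ^ ρ` for `η t → η₀` rather than a constant `η`,
i.e. the uniform convergence theorem for the measurable slowly varying function
`log g (exp x) - ρ x`, which follows from its convergence in measure on bounded intervals.
-/

open MeasureTheory ProbabilityTheory Real Filter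
open scoped NNReal ENNReal Topology

theorem MeasureTheory.tendstoInMeasure_of_tendsto_ae_of_isCountablyGenerated
    {α ι E : Type*} [MeasurableSpace α] {μ : Measure α} [IsFiniteMeasure μ]
    [PseudoEMetricSpace E] {l : Filter ι} [l.IsCountablyGenerated] {f : ι → α → E} {g : α → E}
    (hf : ∀ i, AEStronglyMeasurable (f i) μ)
    (hfg : ∀ᵐ x ∂μ, Tendsto (fun i => f i x) l (𝓝 (g x))) :
    TendstoInMeasure μ f l g := fun ε hε =>
  tendsto_iff_seq_tendsto.2 fun u hu =>
    tendstoInMeasure_of_tendsto_ae (fun n => hf (u n)) (hfg.mono fun _ hx => hx.comp hu) ε hε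

theorem exists_notMem_add_notMem_of_restrict_Icc_lt {A B : Set ℝ} {w : ℝ} (hw : |w| ≤ 1)
    (hA : volume.restrict (Set.Icc 0 1) A < 1 / 2)
    (hB : volume.restrict (Set.Icc (-1) 2) B < 1 / 2) :
    ∃ u, u ∉ A ∧ u + w ∉ B := by
  by_contra! hAB
  set C := (· + w) ⁻¹' (B ∩ Set.Icc (-1) 2)
  have hcover : Set.Icc (0 : ℝ) 1 ⊆ A ∪ C := fun u hu => by
    by_cases huA : u ∈ A
    · exact Or.inl huA
    · have := abs_le.1 hw
      exact Or.inr ⟨hAB u huA, by constructor <;> linarith [hu.1, hu.2]⟩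
  have hC : volume.restrict (Set.Icc 0 1) C < 1 / 2 :=
    calc volume.restrict (Set.Icc 0 1) C ≤ volume C := Measure.restrict_le_self _
      _ = volume.restrict (Set.Icc (-1) 2) B := by
        rw [measure_preimage_add_right, Measure.restrict_apply' measurableSet_Icc]
      _ < 1 / 2 := hB
  have : (1 : ℝ≥0∞) < 1 :=
    calc (1 : ℝ≥0∞) = volume.restrict (Set.Icc 0 1) (Set.Icc 0 1) := by simp
      _ ≤ volume.restrict (Set.Icc 0 1) A + volume.restrict (Set.Icc 0 1) C :=
        (measure_mono hcover).trans (measure_union_le _ _)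
      _ < 1 / 2 + 1 / 2 := ENNReal.add_lt_add hA hC
      _ = 1 := ENNReal.add_halves 1
  exact lt_irrefl _ this

-- The uniform convergence theorem for slowly varying functions, in sequential form.
theorem tendsto_sub_comp_add_of_tendsto_sub {K : ℝ → ℝ} (hK : Measurable K)
    (hslow : ∀ u, Tendsto (fun x => K (x + u) - K x) atTop (𝓝 0))
    {w : ℝ → ℝ} (hw : ∀ᶠ x in atTop, |w x| ≤ 1) :
    Tendsto (fun x => K (x + w x) - K x) atTop (𝓝 0) := by
  set D : ℝ → ℝ → ℝ := fun x u => K (x + u) - K x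
  have hD : ∀ (μ : Measure ℝ) [IsFiniteMeasure μ], TendstoInMeasure μ D atTop 0 := fun μ _ =>
    tendstoInMeasure_of_tendsto_ae_of_isCountablyGenerated
      (fun x => ((hK.comp (measurable_const_add x)).sub_const _).aestronglyMeasurable)
      (ae_of_all _ hslow)
  have hxw : Tendsto (fun x => x + w x) atTop atTop :=
    tendsto_atTop_mono' _ (hw.mono fun x hx => by simp only [id]; linarith [(abs_le.1 hx).1])
      (tendsto_atTop_add_const_right _ (-1) tendsto_id)
  have hfar := tendstoInMeasure_iff_norm.1 (hD (volume.restrict (Set.Icc (-1) 2)))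
  have hnear := tendstoInMeasure_iff_norm.1 ((hD (volume.restrict (Set.Icc 0 1))).comp hxw)
  refine Metric.tendsto_nhds.2 fun ε hε => ?_
  have half : (0 : ℝ≥0∞) < 1 / 2 := by norm_num
  filter_upwards [hw, (hfar _ (half_pos hε)).eventually_lt_const half,
    (hnear _ (half_pos hε)).eventually_lt_const half] with x hwx hfarx hnearx
  obtain ⟨u, hu_near, hu_far⟩ := exists_notMem_add_notMem_of_restrict_Icc_lt hwx hnearx hfarx
  simp only [Set.mem_ofPred_eq, Pi.zero_apply, sub_zero, not_le, Function.comp_apply,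
    norm_eq_abs] at hu_near hu_far
  -- `K` at the common point `x + w x + u` is within `ε / 2` of both `K x` and `K (x + w x)`.
  have hsplit : K (x + w x) - K x = D x (u + w x) - D (x + w x) u := by
    simp only [D]; ring_nf
  rw [dist_zero_right, norm_eq_abs, hsplit]
  linarith [abs_sub (D x (u + w x)) (D (x + w x) u)]

def IsRegularlyVarying (g : ℝ → ℝ) (ρ : ℝ) : Prop :=
  ∀ η : ℝ, 0 < η → Tendsto (fun t => g (η * t) / g t) atTop (𝓝 (η ^ ρ))

namespace IsRegularlyVarying

variable {g : ℝ → ℝ} {ρ : ℝ}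

theorem tendsto_comp_mul_div_of_tendsto_one (hg : IsRegularlyVarying g ρ)
    (hg_meas : Measurable g) (hg_pos : ∀ x, 0 < g x) {η : ℝ → ℝ} (hη : Tendsto η atTop (𝓝 1)) :
    Tendsto (fun t => g (η t * t) / g t) atTop (𝓝 1) := by
  set K : ℝ → ℝ := fun x => log (g (exp x)) - ρ * x
  have hK_meas : Measurable K :=
    (measurable_log.comp (hg_meas.comp measurable_exp)).sub (measurable_id.const_mul ρ)
  have hK_slow : ∀ u, Tendsto (fun x => K (x + u) - K x) atTop (𝓝 0) := by
    intro u
    have h := ((hg _ (exp_pos u)).comp tendsto_exp_atTop).log (rpow_pos_of_pos (exp_pos u) ρ).ne'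
    rw [log_rpow (exp_pos u), log_exp] at h
    refine (sub_self (ρ * u) ▸ h.sub_const (ρ * u)).congr fun x => ?_
    simp only [K, Function.comp_apply, exp_add, log_div (hg_pos _).ne' (hg_pos _).ne', mul_comm]
    ring
  set w : ℝ → ℝ := fun x => log (η (exp x))
  have hw : Tendsto w atTop (𝓝 0) := by
    simpa [w] using (hη.comp tendsto_exp_atTop).log one_ne_zero
  have hKw := tendsto_sub_comp_add_of_tendsto_sub hK_meas hK_slow
    (hw.eventually (eventually_abs_sub_lt 0 one_pos) |>.mono fun x hx => by simpa using hx.le)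
  have hexp := ((hKw.add (hw.const_mul ρ)).rexp).comp tendsto_log_atTop
  rw [mul_zero, add_zero, exp_zero] at hexp
  refine hexp.congr' ?_
  filter_upwards [eventually_gt_atTop 0, hη.eventually (lt_mem_nhds one_pos)] with t ht hηt
  have hw_t : w (log t) = log (η t * t) - log t := by
    simp only [w, exp_log ht, log_mul hηt.ne' ht.ne']; ring
  simp only [Function.comp_apply, K, hw_t, add_sub_cancel, exp_log ht, exp_log (mul_pos hηt ht)]
  rw [← exp_log (div_pos (hg_pos _) (hg_pos _)), log_div (hg_pos _).ne' (hg_pos _).ne']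
  congr 1
  ring

theorem tendsto_comp_mul_div (hg : IsRegularlyVarying g ρ) (hg_meas : Measurable g)
    (hg_pos : ∀ x, 0 < g x) {η : ℝ → ℝ} {η₀ : ℝ} (hη : Tendsto η atTop (𝓝 η₀)) (hη₀ : 0 < η₀) :
    Tendsto (fun t => g (η t * t) / g t) atTop (𝓝 (η₀ ^ ρ)) := by
  have hη' : Tendsto (fun s => η (s / η₀) / η₀) atTop (𝓝 1) := by
    simpa [hη₀.ne'] using (hη.comp (tendsto_id.atTop_div_const hη₀)).div_const η₀
  have h := ((hg.tendsto_comp_mul_div_of_tendsto_one hg_meas hg_pos hη').comp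
    (tendsto_id.const_mul_atTop hη₀)).mul (hg η₀ hη₀)
  rw [one_mul] at h
  refine h.congr fun t => ?_
  simp only [Function.comp_apply, id]
  rw [div_mul_div_cancel₀ (hg_pos _).ne']
  field_simp

theorem tendsto_comp_mul_sub_div (hg : IsRegularlyVarying g ρ) (hg_meas : Measurable g)
    (hg_pos : ∀ x, 0 < g x) {b : ℝ} (hb : 0 < b) (c : ℝ) :
    Tendsto (fun t => g (b * (t - c)) / g t) atTop (𝓝 (b ^ ρ)) := by
  have hη : Tendsto (fun t => b * (1 - c / t)) atTop (𝓝 b) := by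
    simpa using ((tendsto_const_nhds.div_atTop tendsto_id).const_sub 1).const_mul b
  refine (hg.tendsto_comp_mul_div hg_meas hg_pos hη hb).congr' ?_
  filter_upwards [eventually_ne_atTop 0] with t ht
  field_simp

end IsRegularlyVarying

theorem integral_mul_gaussianPDFReal_affine (G : ℝ → ℝ) {v : ℝ≥0} (hv : v ≠ 0) {b : ℝ}
    (hb : 0 < b) (c s : ℝ) :
    ∫ x, G x * gaussianPDFReal (c + x / b) v s = b * ∫ z, G (b * (s - z - c)) ∂gaussianReal 0 v := by
  have hscale := Measure.integral_comp_mul_left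
    (fun y => G y * gaussianPDFReal 0 v (s - c - y / b)) b
  simp only [abs_inv, abs_of_pos hb, smul_eq_mul, mul_div_cancel_left₀ _ hb.ne'] at hscale
  calc ∫ x, G x * gaussianPDFReal (c + x / b) v s
      = ∫ y, G y * gaussianPDFReal 0 v (s - c - y / b) := by
        simp only [gaussianPDFReal, sub_zero, sub_sub]
    _ = b * ∫ x, G (b * x) * gaussianPDFReal 0 v (s - c - x) := by
        rw [hscale, mul_inv_cancel_left₀ hb.ne']
    _ = b * ∫ z, G (b * (s - z - c)) ∂gaussianReal 0 v := by
        rw [integral_gaussianReal_eq_integral_smul hv,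
          ← integral_sub_left_eq_self _ volume (s - c)]
        simp only [smul_eq_mul, sub_sub_cancel, mul_comm (gaussianPDFReal _ _ _)]
        ring_nf

theorem IsRegularlyVarying.tendsto_integral_comp_mul_sub_div {g : ℝ → ℝ} {ρ : ℝ}
    (hg : IsRegularlyVarying g ρ) (hg_meas : Measurable g) (hg_pos : ∀ x, 0 < g x)
    (μ : Measure ℝ) [IsProbabilityMeasure μ] {b c : ℝ} (hb : 0 < b) {h : ℝ → ℝ}
    (hh : Integrable h μ) (hdom : ∀ s t, g (b * (t - s - c)) / g t ≤ h s) :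
    Tendsto (fun t => (∫ z, g (b * (t - z - c)) ∂μ) / g t) atTop (𝓝 (b ^ ρ)) := by
  simp_rw [← integral_div]
  rw [← integral_eq_const (μ := μ) (f := fun _ => b ^ ρ) (ae_of_all _ fun _ => rfl)]
  refine tendsto_integral_filter_of_dominated_convergence h
    (Eventually.of_forall fun t => ((hg_meas.comp (by fun_prop)).div_const _).aestronglyMeasurable)
    (Eventually.of_forall fun t => ae_of_all _ fun z => ?_) hh
    (ae_of_all _ fun z => ?_)
  · rw [norm_of_nonneg (div_nonneg (hg_pos _).le (hg_pos _).le)]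
    exact hdom z t
  · simpa only [sub_sub] using hg.tendsto_comp_mul_sub_div hg_meas hg_pos hb (z + c)

theorem tail_transfer_regular_variation_general
    (g : ℝ → ℝ) (hg_meas : Measurable g) (hg_pos : ∀ x, 0 < g x)
    (α : ℝ)
    (hg_rv : ∀ η : ℝ, 0 < η →
      Tendsto (fun t => g (η * t) / g t) atTop (nhds (η ^ (-α))))
    (hdom : ∀ a' b : ℝ, 0 < b → ∃ h : ℝ → ℝ, (∀ s, 0 ≤ h s) ∧
      (∀ s t : ℝ, g (b * (t - s - a')) / g t ≤ h s) ∧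
      (∀ (m' : ℝ) (v' : NNReal), v' ≠ 0 → Integrable h (gaussianReal m' v')))
    (σxx σxy v a m : ℝ) (hσxx : 0 < σxx) (hσxy : 0 < σxy) (hv : 0 < v) :
    letI φ : ℝ → ℝ → ℝ := fun y mu =>
      (Real.sqrt (2 * Real.pi * v))⁻¹ * Real.exp (-(y - mu) ^ 2 / (2 * v))
    Tendsto (fun s => (∫ x, g x * φ s (a + σxy * (x - m) / σxx)) / g s)
      atTop (nhds ((σxy / σxx) ^ (α - 1))) := by
  set b := σxx / σxy
  have hb : 0 < b := div_pos hσxx hσxy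
  obtain ⟨h, -, hh_dom, hh_int⟩ := hdom (a - m / b) b hb
  lift v to ℝ≥0 using hv.le
  have hv0 : v ≠ 0 := by exact_mod_cast hv.ne'
  have hmean : ∀ x, a + σxy * (x - m) / σxx = a - m / b + x / b := fun x => by
    simp only [b]; field_simp; ring
  have hexponent : b * b ^ (-α) = (σxy / σxx) ^ (α - 1) := by
    rw [← inv_div, inv_rpow hb.le, ← rpow_neg hb.le, neg_sub, sub_eq_add_neg, rpow_add hb,
      rpow_one]
  rw [← hexponent]
  refine ((IsRegularlyVarying.tendsto_integral_comp_mul_sub_div hg_rv hg_meas hg_pos _ hb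
    (hh_int 0 v hv0) hh_dom).const_mul b).congr fun s => ?_
  rw [← mul_div_assoc, ← integral_mul_gaussianPDFReal_affine g hv0 hb]
  simp only [gaussianPDFReal, hmean]

/-- Tail transfer under a regularly varying marginal constraint (k = 1): if g is a
regularly varying probability density of index −α (α > 1) satisfying a domination
condition, and f̃(x,y) = g(x) φ(y; a + σ_xy (x−m)/σ_xx, v), then the Y-marginal
f̃_Y(s) = ∫ g(x) φ(s; a + σ_xy(x−m)/σ_xx, v) dx satisfies
f̃_Y(s)/g(s) → (σ_xy/σ_xx)^{α−1} as s → ∞. -/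
theorem tail_transfer_regular_variation
    (g : ℝ → ℝ) (hg_meas : Measurable g) (hg_pos : ∀ x, 0 < g x)
    (hg_dens : (∫ x, g x) = 1)
    (α : ℝ) (hα : 1 < α)
    (hg_rv : ∀ η : ℝ, 0 < η →
      Tendsto (fun t => g (η * t) / g t) atTop (nhds (η ^ (-α))))
    (hdom : ∀ a' b : ℝ, 0 < b → ∃ h : ℝ → ℝ, (∀ s, 0 ≤ h s) ∧
      (∀ s t : ℝ, g (b * (t - s - a')) / g t ≤ h s) ∧
      (∀ (m' : ℝ) (v' : NNReal), v' ≠ 0 → Integrable h (gaussianReal m' v')))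
    (σxx σxy v a m : ℝ) (hσxx : 0 < σxx) (hσxy : 0 < σxy) (hv : 0 < v) :
    letI φ : ℝ → ℝ → ℝ := fun y mu =>
      (Real.sqrt (2 * Real.pi * v))⁻¹ * Real.exp (-(y - mu) ^ 2 / (2 * v))
    Tendsto (fun s => (∫ x, g x * φ s (a + σxy * (x - m) / σxx)) / g s)
      atTop (nhds ((σxy / σxx) ^ (α - 1))) :=
  tail_transfer_regular_variation_general g hg_meas hg_pos α hg_rv hdom σxx σxy v a m hσxx hσxy hv
end
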